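/- arXiv:2002.06245 — 4 statements merged into one kernel-verified Lean document; each statement's English description precedes it below -/
import Mathlib

section
/- For every real x and y, the sequence n ↦ L_n(x/n, y) / y^n converges, as n → ∞, to Σ_{s=0}^∞ (-1)^s (x/y)^s / (s!)^2, i.e., to J_0(2√(x/y)) expressed as a power series, provided y ≠ 0. -/
/-!
Since `C(n, s) / n^s = (n.descFactorial s / n^s) / s!`, the normalised polynomial
`L_n(x/n, y) / y^n` is the Bessel series `∑ (-1)^s (x/y)^s / (s!)^2` with its `s`-th term
multiplied by `n.descFactorial s / n^s`. These factors lie in `[0, 1]` and tend to `1`, so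
dominated convergence for series (Tannery's theorem) gives the limit.
-/

/-- Two-variable Laguerre polynomial. -/
noncomputable def laguerre2 (n : ℕ) (x y : ℝ) : ℝ :=
  ∑ s ∈ Finset.range (n + 1),
    (n.choose s : ℝ) * (-1) ^ s * y ^ (n - s) * x ^ s / (Nat.factorial s : ℝ)

open Filter Finset Topology Nat

theorem tendsto_tsum_mul_of_tendsto_one {α β 𝕜 : Type*} [NormedRing 𝕜] [CompleteSpace 𝕜]
    {l : Filter α} {a : β → 𝕜} {c : α → β → 𝕜} (ha : Summable (‖a ·‖))
    (hc : ∀ᶠ n in l, ∀ s, ‖c n s‖ ≤ 1) (hlim : ∀ s, Tendsto (c · s) l (𝓝 1)) :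
    Tendsto (fun n ↦ ∑' s, a s * c n s) l (𝓝 (∑' s, a s)) := by
  refine tendsto_tsum_of_dominated_convergence ha (fun s ↦ ?_) ?_
  · simpa using (hlim s).const_mul (a s)
  · filter_upwards [hc] with n hn s
    calc ‖a s * c n s‖ ≤ ‖a s‖ * ‖c n s‖ := norm_mul_le _ _
      _ ≤ ‖a s‖ * 1 := by gcongr; exact hn s
      _ = ‖a s‖ := mul_one _

theorem Nat.cast_descFactorial_div_pow_le_one (n s : ℕ) :
    (n.descFactorial s : ℝ) / (n : ℝ) ^ s ≤ 1 :=
  div_le_one_of_le₀ (mod_cast descFactorial_le_pow n s) (by positivity)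

theorem Nat.tendsto_cast_descFactorial_div_pow (s : ℕ) :
    Tendsto (fun n : ℕ ↦ (n.descFactorial s : ℝ) / (n : ℝ) ^ s) atTop (𝓝 1) := by
  have hpow : ∀ᶠ n : ℕ in atTop, (n : ℝ) ^ s ≠ 0 :=
    eventually_atTop.mpr ⟨1, fun n hn ↦ pow_ne_zero _ (mod_cast (one_le_iff_ne_zero.mp hn))⟩
  exact (Asymptotics.isEquivalent_iff_tendsto_one hpow).mp (isEquivalent_descFactorial s)

theorem summable_norm_neg_one_pow_mul_pow_div_factorial_sq (z : ℝ) :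
    Summable fun s : ℕ ↦ ‖(-1) ^ s * z ^ s / (s ! : ℝ) ^ 2‖ := by
  refine .of_nonneg_of_le (fun _ ↦ norm_nonneg _) (fun s ↦ ?_)
    (Real.summable_pow_div_factorial |z|)
  have hfac : (s ! : ℝ) ≤ (s ! : ℝ) ^ 2 :=
    le_self_pow₀ (mod_cast s.factorial_pos) two_ne_zero
  rw [Real.norm_eq_abs, abs_div, abs_mul, abs_pow, abs_pow, abs_neg, abs_one, one_pow, one_mul,
    abs_of_nonneg (by positivity : (0 : ℝ) ≤ (s ! : ℝ) ^ 2)]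
  exact div_le_div_of_nonneg_left (by positivity) (by positivity) hfac

theorem laguerre2_div_pow_eq_tsum (x : ℝ) {y : ℝ} (hy : y ≠ 0) (n : ℕ) :
    laguerre2 n (x / n) y / y ^ n =
      ∑' s : ℕ, (-1) ^ s * (x / y) ^ s / (s ! : ℝ) ^ 2 *
        ((n.descFactorial s : ℝ) / (n : ℝ) ^ s) := by
  rw [tsum_eq_sum (s := range (n + 1)) fun s hs ↦ by
    simp [descFactorial_eq_zero_iff_lt.mpr (not_lt.mp (mem_range.not.mp hs))]]
  rw [laguerre2, sum_div]
  refine sum_congr rfl fun s hs ↦ ?_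
  have hsn : s ≤ n := Nat.lt_succ_iff.mp (mem_range.mp hs)
  rw [descFactorial_eq_factorial_mul_choose, pow_sub₀ y hy hsn, div_pow, div_pow]
  push_cast
  field_simp

theorem stmt1 (x y : ℝ) (hy : y ≠ 0) :
    Filter.Tendsto (fun n : ℕ => laguerre2 n (x / n) y / y ^ n) Filter.atTop
      (nhds (∑' s : ℕ, (-1) ^ s * (x / y) ^ s / ((Nat.factorial s : ℝ)) ^ 2)) := by
  simp_rw [laguerre2_div_pow_eq_tsum x hy]
  refine tendsto_tsum_mul_of_tendsto_one
    (summable_norm_neg_one_pow_mul_pow_div_factorial_sq (x / y)) (.of_forall fun n s ↦ ?_)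
    tendsto_cast_descFactorial_div_pow
  rw [Real.norm_of_nonneg (by positivity)]
  exact cast_descFactorial_div_pow_le_one n s
end

section
/- For all real x, y, the exponential generating function of two-variable Hermite polynomials holds: Σ_{n=0}^∞ (t^n/n!) H_n(x,y) = exp(x t + y t²) for every real t, with the series converging absolutely. -/
/-- Two-variable Hermite (Kampé de Fériet) polynomial. -/
noncomputable def hermite2 (n : ℕ) (x y : ℝ) : ℝ :=
  (Nat.factorial n : ℝ) * ∑ r ∈ Finset.range (n / 2 + 1),
    x ^ (n - 2 * r) * y ^ r / ((Nat.factorial (n - 2 * r) : ℝ) * (Nat.factorial r : ℝ))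

/-!
Multiplying the exponential series of `exp (x t)` and `exp (y t²)` gives the absolutely summable double series
`∑_{k,r} (x t)^k / k! * (y t²)^r / r!`. Grouping its terms by the total degree `n = k + 2r` in `t`
yields, for each `n`, exactly `t^n / n! * H_n(x, y)`.
-/

open Finset

def sigmaFinHalfEquivProd : (Σ n : ℕ, Fin (n / 2 + 1)) ≃ ℕ × ℕ where
  toFun p := (p.1 - 2 * p.2.1, p.2.1)
  invFun q := ⟨q.1 + 2 * q.2, ⟨q.2, by omega⟩⟩
  left_inv := by
    rintro ⟨n, r, hr⟩
    refine Sigma.ext (by simp; omega) ?_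
    rw [Fin.heq_ext_iff (by simp; omega)]
  right_inv := by
    rintro ⟨k, r⟩
    simp

lemma Real.hasSum_pow_div_factorial_mul_pow_div_factorial (a b : ℝ) :
    HasSum (fun p : ℕ × ℕ => a ^ p.1 / p.1.factorial * (b ^ p.2 / p.2.factorial))
      (Real.exp (a + b)) := by
  have hexp (c : ℝ) : HasSum (fun k : ℕ => c ^ k / k.factorial) (Real.exp c) := by
    simpa only [Real.exp_eq_exp_ℝ] using NormedSpace.expSeries_div_hasSum_exp c
  have hnorm (c : ℝ) : Summable fun k : ℕ => ‖c ^ k / k.factorial‖ := by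
    simpa only [Real.norm_eq_abs, abs_div, abs_pow, Nat.abs_cast]
      using Real.summable_pow_div_factorial |c|
  rw [Real.exp_add]
  exact HasSum.mul (f := fun k : ℕ => a ^ k / k.factorial) (g := fun k : ℕ => b ^ k / k.factorial)
    (hexp a) (hexp b) (summable_mul_of_summable_norm (hnorm a) (hnorm b))

lemma pow_div_factorial_mul_hermite2 (n : ℕ) (x y t : ℝ) :
    t ^ n / n.factorial * hermite2 n x y =
      ∑ r ∈ range (n / 2 + 1),
        (x * t) ^ (n - 2 * r) / (n - 2 * r).factorial * ((y * t ^ 2) ^ r / r.factorial) := by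
  rw [hermite2, ← mul_assoc, div_mul_cancel₀ _ (by positivity), mul_sum]
  refine sum_congr rfl fun r hr => ?_
  have ht : t ^ n = t ^ (n - 2 * r) * t ^ (2 * r) := by
    rw [← pow_add]
    congr 1
    simp only [mem_range] at hr
    omega
  rw [mul_pow, mul_pow, ← pow_mul, ht]
  field_simp

theorem stmt5 (x y t : ℝ) :
    HasSum (fun n : ℕ => t ^ n / (Nat.factorial n : ℝ) * hermite2 n x y)
      (Real.exp (x * t + y * t ^ 2)) := by
  have hpairs := sigmaFinHalfEquivProd.hasSum_iff.mpr
    (Real.hasSum_pow_div_factorial_mul_pow_div_factorial (x * t) (y * t ^ 2))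
  refine hpairs.sigma fun n => ?_
  rw [pow_div_factorial_mul_hermite2, ← Fin.sum_univ_eq_sum_range]
  exact hasSum_fintype _
end

section
/- For all real x, y with 4yt < 1 and t ≥ 0 small enough for convergence, Σ_{n=0}^∞ (t^n/n!) H_{2n}(x, y) = (1 - 4yt)^{-1/2} · exp(t x² / (1 - 4yt)). -/
open Finset
open scoped Nat

theorem HasSum.sum_antidiagonal {α A : Type*} [AddCommMonoid α] [TopologicalSpace α]
    [ContinuousAdd α] [RegularSpace α] [AddMonoid A] [HasAntidiagonal A] {f : A × A → α}
    {a : α} (hf : HasSum f a) : HasSum (fun n => ∑ p ∈ antidiagonal n, f p) a :=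
  (HasAntidiagonal.sigmaAntidiagonalEquivProd.hasSum_iff.2 hf).sigma fun n => by
    rw [← sum_coe_sort]
    exact hasSum_fintype _

theorem Real.hasSum_multichoose_mul_pow (a : ℝ) {u : ℝ} (hu : |u| < 1) :
    HasSum (fun n => Ring.multichoose a n * u ^ n) ((1 - u) ^ (-a)) := by
  have hmem : u ∈ Metric.eball (0 : ℝ) 1 := by
    rw [Metric.mem_eball, edist_zero_right, enorm_eq_nnnorm]
    exact_mod_cast hu
  have h := (Real.one_div_one_sub_rpow_hasFPowerSeriesOnBall_zero a).hasSum hmem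
  simp only [FormalMultilinearSeries.ofScalars_apply_eq, zero_add, smul_eq_mul] at h
  rw [Real.rpow_neg (by linarith [(abs_lt.1 hu).2]), inv_eq_one_div]
  simpa [← Ring.multichoose_eq, mul_comm] using h

theorem Ring.multichoose_pos_of_pos {a : ℝ} (ha : 0 < a) (n : ℕ) :
    0 < Ring.multichoose a n := by
  refine pos_of_mul_pos_right (a := (n ! : ℝ)) ?_ (Nat.cast_nonneg _)
  rw [← nsmul_eq_mul, factorial_nsmul_multichoose_eq_ascPochhammer,
    Polynomial.ascPochhammer_smeval_eq_eval]
  exact ascPochhammer_pos n a ha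

theorem ascPochhammer_eval_natCast_add_half_mul (k r : ℕ) :
    (ascPochhammer ℝ r).eval ((k : ℝ) + 1 / 2) * 4 ^ r * (k + r)! * (2 * k)! =
      (2 * (k + r))! * k ! := by
  induction r with
  | zero => simp [mul_comm]
  | succ r ih =>
    rw [ascPochhammer_succ_eval, show 2 * (k + (r + 1)) = 2 * (k + r) + 1 + 1 by ring,
      ← add_assoc, Nat.factorial_succ (k + r), Nat.factorial_succ, Nat.factorial_succ]
    push_cast
    linear_combination (4 * ((k : ℝ) + r + 1 / 2) * (k + r + 1)) * ih

theorem Ring.multichoose_natCast_add_half (k r : ℕ) :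
    Ring.multichoose ((k : ℝ) + 1 / 2) r =
      (2 * (k + r))! * k ! / (4 ^ r * r ! * (k + r)! * (2 * k)!) := by
  rw [eq_div_iff (by positivity), ← ascPochhammer_eval_natCast_add_half_mul,
    ← Polynomial.ascPochhammer_smeval_eq_eval, ← factorial_nsmul_multichoose_eq_ascPochhammer,
    nsmul_eq_mul]
  ring

theorem hasSum_pow_div_factorial_mul_multichoose (z : ℝ) {u : ℝ} (hu : |u| < 1) (k : ℕ) :
    HasSum (fun r => z ^ k / k ! * (Ring.multichoose ((k : ℝ) + 1 / 2) r * u ^ r))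
      ((1 - u) ^ (-(1 / 2 : ℝ)) * ((z / (1 - u)) ^ k / k !)) := by
  have hu₁ : 0 < 1 - u := by linarith [(abs_lt.1 hu).2]
  have hsum : (1 - u) ^ (-(1 / 2 : ℝ)) * ((z / (1 - u)) ^ k / k !) =
      z ^ k / k ! * (1 - u) ^ (-((k : ℝ) + 1 / 2)) := by
    rw [neg_add, Real.rpow_add hu₁, Real.rpow_neg hu₁.le (k : ℝ), Real.rpow_natCast, div_pow]
    ring
  rw [hsum]
  exact (Real.hasSum_multichoose_mul_pow _ hu).mul_left _

theorem hasSum_pow_div_factorial_mul_multichoose_prod (z : ℝ) {u : ℝ} (hu : |u| < 1) :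
    HasSum (fun p : ℕ × ℕ =>
        z ^ p.1 / p.1 ! * (Ring.multichoose ((p.1 : ℝ) + 1 / 2) p.2 * u ^ p.2))
      ((1 - u) ^ (-(1 / 2 : ℝ)) * Real.exp (z / (1 - u))) := by
  have hexp (w v : ℝ) :
      HasSum (fun k : ℕ => (1 - v) ^ (-(1 / 2 : ℝ)) * ((w / (1 - v)) ^ k / k !))
        ((1 - v) ^ (-(1 / 2 : ℝ)) * Real.exp (w / (1 - v))) := by
    rw [Real.exp_eq_exp_ℝ]
    exact (NormedSpace.expSeries_div_hasSum_exp (w / (1 - v))).mul_left _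
  have hmc (p : ℕ × ℕ) : 0 < Ring.multichoose ((p.1 : ℝ) + 1 / 2) p.2 :=
    Ring.multichoose_pos_of_pos (by positivity) _
  have hsummable : Summable fun p : ℕ × ℕ =>
      z ^ p.1 / p.1 ! * (Ring.multichoose ((p.1 : ℝ) + 1 / 2) p.2 * u ^ p.2) := by
    refine Summable.of_norm ?_
    simp only [norm_mul, norm_div, norm_pow, Real.norm_eq_abs, Nat.abs_cast,
      abs_of_pos (hmc _)]
    have habs : |(|u|)| < 1 := by rwa [abs_abs]
    refine (summable_prod_of_nonneg fun p => by have := hmc p; positivity).2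
      ⟨fun k => (hasSum_pow_div_factorial_mul_multichoose _ habs k).summable, ?_⟩
    simpa only [(hasSum_pow_div_factorial_mul_multichoose _ habs _).tsum_eq]
      using (hexp |z| |u|).summable
  have hlim := (hsummable.hasSum.prod_fiberwise
    (hasSum_pow_div_factorial_mul_multichoose z hu)).unique (hexp z u)
  exact hlim ▸ hsummable.hasSum

theorem pow_div_factorial_mul_hermite2_two_mul (x y t : ℝ) (n : ℕ) :
    t ^ n / n ! * hermite2 (2 * n) x y = ∑ p ∈ antidiagonal n,
      (t * x ^ 2) ^ p.1 / p.1 ! *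
        (Ring.multichoose ((p.1 : ℝ) + 1 / 2) p.2 * (4 * y * t) ^ p.2) := by
  rw [← Nat.sum_antidiagonal_swap]
  simp only [Prod.fst_swap, Prod.snd_swap]
  rw [Nat.sum_antidiagonal_eq_sum_range_succ (fun i j => (t * x ^ 2) ^ j / j ! *
      (Ring.multichoose ((j : ℝ) + 1 / 2) i * (4 * y * t) ^ i)),
    hermite2, Nat.mul_div_cancel_left n two_pos, mul_sum, mul_sum]
  refine sum_congr rfl fun r hr => ?_
  obtain ⟨k, rfl⟩ : ∃ k, n = k + r := ⟨n - r, by grind⟩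
  rw [show 2 * (k + r) - 2 * r = 2 * k by omega, Nat.add_sub_cancel,
    Ring.multichoose_natCast_add_half]
  field_simp
  ring

theorem stmt6_general (x y t : ℝ) (ht : 4 * |y| * |t| < 1) :
    HasSum (fun n : ℕ => t ^ n / (Nat.factorial n : ℝ) * hermite2 (2 * n) x y)
      ((1 - 4 * y * t) ^ (-(1 / 2 : ℝ)) * Real.exp (t * x ^ 2 / (1 - 4 * y * t))) := by
  have hu : |4 * y * t| < 1 := by
    rwa [abs_mul, abs_mul, abs_of_pos four_pos]
  simp only [pow_div_factorial_mul_hermite2_two_mul]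
  exact (hasSum_pow_div_factorial_mul_multichoose_prod (t * x ^ 2) hu).sum_antidiagonal

theorem stmt6 (x y t : ℝ) (ht0 : 0 ≤ t) (ht : 4 * |y| * |t| < 1) :
    HasSum (fun n : ℕ => t ^ n / (Nat.factorial n : ℝ) * hermite2 (2 * n) x y)
      ((1 - 4 * y * t) ^ (-(1 / 2 : ℝ)) * Real.exp (t * x ^ 2 / (1 - 4 * y * t))) :=
  stmt6_general x y t ht
end

section
/- For every real x ≠ 0 and real y, lim_{n→∞} H_n(x, y/n²) / x^n = exp(y/x²). -/
open Filter Finset Asymptotics Topology Nat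

lemma tendsto_descFactorial_div_pow (k : ℕ) :
    Tendsto (fun n : ℕ => (n.descFactorial k : ℝ) / (n : ℝ) ^ k) atTop (𝓝 1) :=
  (isEquivalent_iff_tendsto_one ((eventually_ne_atTop 0).mono fun _ hn => by positivity)).mp
    (isEquivalent_descFactorial k)

lemma descFactorial_div_pow_le_one (n k : ℕ) : (n.descFactorial k : ℝ) / (n : ℝ) ^ k ≤ 1 :=
  div_le_one_of_le₀ (mod_cast n.descFactorial_le_pow k) (by positivity)

theorem tendsto_tsum_descFactorial_div_pow_mul_pow_div_factorial (k : ℕ) (t : ℝ) :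
    Tendsto (fun n : ℕ => ∑' r, (n.descFactorial (k * r) : ℝ) / (n : ℝ) ^ (k * r) * t ^ r / r !)
      atTop (𝓝 (Real.exp t)) := by
  rw [Real.exp_eq_exp_ℝ, NormedSpace.exp_eq_tsum_div]
  refine tendsto_tsum_of_dominated_convergence (Real.summable_pow_div_factorial |t|)
    (fun r => by simpa using ((tendsto_descFactorial_div_pow (k * r)).mul_const (t ^ r)).div_const _)
    (Eventually.of_forall fun n r => ?_)
  rw [norm_div, norm_mul, norm_pow, Real.norm_eq_abs, Real.norm_natCast,
    abs_of_nonneg (by positivity : (0 : ℝ) ≤ _)]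
  gcongr
  exact mul_le_of_le_one_left (by positivity) (descFactorial_div_pow_le_one n _)

lemma hermite2_div_pow {x : ℝ} (hx : x ≠ 0) (n : ℕ) (y : ℝ) :
    hermite2 n x y / x ^ n =
      ∑ r ∈ range (n / 2 + 1), (n.descFactorial (2 * r) : ℝ) * (y / x ^ 2) ^ r / r ! := by
  rw [hermite2, mul_sum, sum_div]
  refine sum_congr rfl fun r hr => ?_
  have h2r : 2 * r ≤ n := by rw [mem_range] at hr; omega
  have hfact : (n ! : ℝ) = (n - 2 * r)! * n.descFactorial (2 * r) :=
    mod_cast (factorial_mul_descFactorial h2r).symm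
  rw [hfact, pow_sub₀ x hx h2r, div_pow, ← pow_mul]
  field_simp

lemma hermite2_scaled_div_pow_eq_tsum {x : ℝ} (hx : x ≠ 0) (n : ℕ) (y : ℝ) :
    hermite2 n x (y / (n : ℝ) ^ 2) / x ^ n =
      ∑' r, (n.descFactorial (2 * r) : ℝ) / (n : ℝ) ^ (2 * r) * (y / x ^ 2) ^ r / r ! := by
  rw [hermite2_div_pow hx, tsum_eq_sum fun r hr => ?_]
  · refine sum_congr rfl fun r _ => ?_
    rw [div_right_comm, div_pow, pow_mul]
    ring
  · have : n < 2 * r := by rw [mem_range] at hr; omega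
    simp [descFactorial_eq_zero_iff_lt.mpr this]

theorem stmt7 (x y : ℝ) (hx : x ≠ 0) :
    Filter.Tendsto (fun n : ℕ => hermite2 n x (y / (n : ℝ) ^ 2) / x ^ n) Filter.atTop
      (nhds (Real.exp (y / x ^ 2))) := by
  simp_rw [hermite2_scaled_div_pow_eq_tsum hx]
  exact tendsto_tsum_descFactorial_div_pow_mul_pow_div_factorial 2 (y / x ^ 2)
end
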